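/- arXiv:2211.04914 — 4 statements merged into one kernel-verified Lean document; each statement's English description precedes it below -/
import Mathlib

section
/- The generating function A(x) = sum_{n>=2} a_n x^n for DAP counted by length equals (1 - x - x^2 - sqrt(x^4 - 2x^3 - x^2 - 2x + 1)) / (2x); equivalently A(x) satisfies x A(x)^2 + (x^2 + x - 1) A(x) + x^2 = 0 as formal power series. -/
open PowerSeries

/-- A valid step sequence: each step is an up-step `1` or a down-step `-k` (`k ≥ 1`),
and no two down-steps are consecutive. -/
def GoodSteps (p : List ℤ) : Prop :=
  (∀ s ∈ p, s = 1 ∨ s ≤ -1) ∧ List.Chain' (fun a b => a = 1 ∨ b = 1) p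

/-- A Dyck path with air pockets: nonempty, valid steps, ends on the x-axis,
stays weakly above the x-axis. -/
def IsDAP (p : List ℤ) : Prop :=
  p ≠ [] ∧ GoodSteps p ∧ p.sum = 0 ∧ ∀ i, 0 ≤ (p.take i).sum

/-- A grand Dyck path with air pockets: valid steps, ends on the x-axis
(possibly going below it); the empty path is allowed. -/
def IsGDAP (p : List ℤ) : Prop := GoodSteps p ∧ p.sum = 0

/-- Number of DAP of length `n`. -/
noncomputable def dapCount (n : ℕ) : ℕ :=
  Nat.card {p : List ℤ // IsDAP p ∧ p.length = n}

/-- The ordinary generating function of DAP counted by length. -/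
noncomputable def Aps : PowerSeries ℚ := PowerSeries.mk fun n => (dapCount n : ℚ)

/-!
Cut a DAP at its first return to the x-axis: it is uniquely a prime DAP (one touching the axis
only at its endpoints) followed by a possibly empty DAP, so `A = P (1 + A)`. A prime DAP is
either `U D₁` or `U α D_{k+1}` where `α D_k` is an arbitrary DAP, so `P = x² + x A`.
Eliminating `P` gives the quadratic equation.
-/

section LengthGF

open Finset

variable {α : Type*}

noncomputable def lengthGF (S : List α → Prop) : PowerSeries ℚ :=
  mk fun n => (Nat.card {p // S p ∧ p.length = n} : ℚ)

-- `Nat.card` of an infinite type is `0`, so counting identities need finite length slices.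
def FiniteByLength (S : List α → Prop) : Prop :=
  ∀ n, {p | S p ∧ p.length = n}.Finite

theorem FiniteByLength.mono {S T : List α → Prop} (hT : FiniteByLength T)
    (hST : ∀ p, S p → T p) : FiniteByLength S :=
  fun n => (hT n).subset fun p hp => ⟨hST p hp.1, hp.2⟩

theorem coeff_lengthGF (S : List α → Prop) (n : ℕ) :
    coeff n (lengthGF S) = ({p | S p ∧ p.length = n}.ncard : ℚ) :=
  coeff_mk _ _

theorem lengthGF_eq_X_pow (l : List α) : lengthGF (· = l) = X ^ l.length := by
  ext n
  rw [coeff_lengthGF, coeff_X_pow]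
  split_ifs with h
  · have hsingleton : {p | p = l ∧ p.length = n} = {l} :=
      Set.ext fun p => ⟨And.left, fun hp => ⟨hp, hp ▸ h.symm⟩⟩
    rw [hsingleton, Set.ncard_singleton, Nat.cast_one]
  · have hempty : {p | p = l ∧ p.length = n} = ∅ :=
      Set.eq_empty_of_forall_notMem fun p hp => h (hp.2.symm.trans (congrArg _ hp.1))
    rw [hempty, Set.ncard_empty, Nat.cast_zero]

theorem lengthGF_eq_add {S T U : List α → Prop} (hU : ∀ p, U p ↔ S p ∨ T p)
    (hST : ∀ p, S p → ¬T p) (hfin : FiniteByLength U) :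
    lengthGF U = lengthGF S + lengthGF T := by
  ext n
  have hsplit : {p | U p ∧ p.length = n} =
      {p | S p ∧ p.length = n} ∪ {p | T p ∧ p.length = n} := by
    ext p
    simp only [Set.mem_ofPred_eq, Set.mem_union, hU]
    tauto
  have hdisj : Disjoint {p | S p ∧ p.length = n} {p | T p ∧ p.length = n} :=
    Set.disjoint_left.2 fun p hS hT => hST p hS.1 hT.1
  rw [map_add, coeff_lengthGF, coeff_lengthGF, coeff_lengthGF, hsplit,
    Set.ncard_union_eq hdisj ((hfin n).subset (hsplit ▸ Set.subset_union_left))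
      ((hfin n).subset (hsplit ▸ Set.subset_union_right)), Nat.cast_add]

theorem lengthGF_image {S : List α → Prop} (f : List α → List α) (k : ℕ)
    (hf : Set.InjOn f {q | S q}) (hlen : ∀ q, S q → (f q).length = q.length + k) :
    lengthGF (fun p => ∃ q, S q ∧ f q = p) = X ^ k * lengthGF S := by
  ext n
  rw [coeff_X_pow_mul', coeff_lengthGF]
  split_ifs with hk
  · have himage : {p | (∃ q, S q ∧ f q = p) ∧ p.length = n} =
        f '' {q | S q ∧ q.length = n - k} := by
      ext p
      simp only [Set.mem_ofPred_eq, Set.mem_image]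
      constructor
      · rintro ⟨⟨q, hq, rfl⟩, hn⟩
        exact ⟨q, ⟨hq, by rw [hlen q hq] at hn; omega⟩, rfl⟩
      · rintro ⟨q, ⟨hq, hql⟩, rfl⟩
        exact ⟨⟨q, hq, rfl⟩, by rw [hlen q hq]; omega⟩
    rw [himage, (hf.mono fun q hq => hq.1).ncard_image, coeff_lengthGF]
  · have hempty : {p | (∃ q, S q ∧ f q = p) ∧ p.length = n} = ∅ := by
      refine Set.eq_empty_of_forall_notMem ?_
      rintro _ ⟨⟨q, hq, rfl⟩, hn⟩
      rw [hlen q hq] at hn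
      omega
    rw [hempty, Set.ncard_empty, Nat.cast_zero]

theorem lengthGF_eq_mul {S T U : List α → Prop}
    (hU : ∀ p, U p ↔ ∃ a b, S a ∧ T b ∧ a ++ b = p)
    (huniq : ∀ a b a' b', S a → T b → S a' → T b' → a ++ b = a' ++ b' → a = a')
    (hS : FiniteByLength S) (hT : FiniteByLength T) :
    lengthGF U = lengthGF S * lengthGF T := by
  ext n
  let concat : (Σ ij : antidiagonal n,
      {a // S a ∧ a.length = ij.1.1} × {b // T b ∧ b.length = ij.1.2}) →
      {p // U p ∧ p.length = n} := fun x =>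
    ⟨x.2.1.1 ++ x.2.2.1, (hU _).2 ⟨_, _, x.2.1.2.1, x.2.2.2.1, rfl⟩, by
      have := Finset.HasAntidiagonal.mem_antidiagonal.1 x.1.2
      simp only [List.length_append, x.2.1.2.2, x.2.2.2.2, this]⟩
  have hconcat : Function.Bijective concat := by
    constructor
    · rintro ⟨⟨⟨i, j⟩, hij⟩, ⟨a, ha, hai⟩, ⟨b, hb, hbj⟩⟩
        ⟨⟨⟨i', j'⟩, hij'⟩, ⟨a', ha', hai'⟩, ⟨b', hb', hbj'⟩⟩ h
      dsimp only at hai hbj hai' hbj'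
      subst hai hbj hai' hbj'
      have hab : a ++ b = a' ++ b' := congrArg Subtype.val h
      obtain rfl := huniq a b a' b' ha hb ha' hb' hab
      obtain rfl := List.append_cancel_left hab
      rfl
    · rintro ⟨p, hp, rfl⟩
      obtain ⟨a, b, ha, hb, rfl⟩ := (hU p).1 hp
      exact ⟨⟨⟨(a.length, b.length), by simp⟩, ⟨a, ha, rfl⟩, ⟨b, hb, rfl⟩⟩, rfl⟩
  have (i : ℕ) : Finite {a // S a ∧ a.length = i} := (hS i).to_subtype
  have (j : ℕ) : Finite {b // T b ∧ b.length = j} := (hT j).to_subtype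
  simp only [coeff_mul, lengthGF, coeff_mk]
  rw [← Nat.card_eq_of_bijective concat hconcat, Nat.card_sigma,
    ← Finset.sum_coe_sort (antidiagonal n), Nat.cast_sum]
  simp only [Nat.card_prod, Nat.cast_mul]

end LengthGF

theorem goodSteps_append {l₁ l₂ : List ℤ} :
    GoodSteps (l₁ ++ l₂) ↔ GoodSteps l₁ ∧ GoodSteps l₂ ∧
      ∀ x ∈ l₁.getLast?, ∀ y ∈ l₂.head?, x = 1 ∨ y = 1 := by
  simp only [GoodSteps, List.mem_append]
  change (_ ∧ List.IsChain _ (l₁ ++ l₂)) ↔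
    (_ ∧ List.IsChain _ l₁) ∧ (_ ∧ List.IsChain _ l₂) ∧ _
  rw [List.isChain_append]
  grind

theorem IsDAP.exists_eq_one_cons {p : List ℤ} (hp : IsDAP p) : ∃ t, p = 1 :: t := by
  obtain ⟨hne, ⟨hsteps, -⟩, -, hpre⟩ := hp
  obtain ⟨a, t, rfl⟩ := List.exists_cons_of_ne_nil hne
  have ha := hpre 1
  simp only [List.take_succ_cons, List.take_zero, List.sum_singleton] at ha
  obtain rfl : a = 1 := (hsteps a List.mem_cons_self).resolve_right (by omega)
  exact ⟨t, rfl⟩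

theorem IsDAP.exists_eq_concat {p : List ℤ} (hp : IsDAP p) :
    ∃ α a, p = α ++ [a] ∧ a ≤ -1 := by
  obtain ⟨hne, ⟨hsteps, -⟩, hsum, hpre⟩ := hp
  obtain ⟨α, a, rfl⟩ := (List.eq_nil_or_concat' p).resolve_left hne
  refine ⟨α, a, rfl, (hsteps a (by simp)).resolve_left fun ha => ?_⟩
  have hα := hpre α.length
  simp only [List.take_left', List.sum_append, List.sum_singleton, ha] at hα hsum
  omega

theorem eq_nil_or_isDAP_iff {p : List ℤ} :
    p = [] ∨ IsDAP p ↔ GoodSteps p ∧ p.sum = 0 ∧ ∀ i, 0 ≤ (p.take i).sum := by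
  constructor
  · rintro (rfl | ⟨-, hp⟩)
    · exact ⟨⟨by simp, List.isChain_nil⟩, by simp⟩
    · exact hp
  · intro hp
    by_cases hne : p = []
    · exact Or.inl hne
    · exact Or.inr ⟨hne, hp⟩

theorem finiteByLength_of_sum_take_nonneg :
    FiniteByLength fun p : List ℤ => (∀ s ∈ p, s ≤ 1) ∧ ∀ i, 0 ≤ (p.take i).sum := by
  intro n
  refine ((List.finite_length_eq (Set.Icc (-(n : ℤ)) 1) n).image (List.map Subtype.val)).subset ?_
  rintro p ⟨⟨hle, hpre⟩, hlen⟩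
  have hbound : ∀ s ∈ p, s ∈ Set.Icc (-(n : ℤ)) 1 := by
    intro s hs
    refine ⟨?_, hle s hs⟩
    obtain ⟨l₁, l₂, rfl⟩ := List.append_of_mem hs
    have hprefix := hpre (l₁.length + 1)
    have hl₁ : l₁.sum ≤ l₁.length := by
      simpa using List.sum_le_card_nsmul l₁ 1 fun x hx => hle x (by simp [hx])
    simp only [List.take_append, List.take_of_length_le (Nat.le_succ _), List.sum_append,
      Nat.add_sub_cancel_left, List.take_succ_cons, List.take_zero, List.sum_singleton] at hprefix
    simp only [← hlen, List.length_append, List.length_cons]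
    omega
  lift p to List (Set.Icc (-(n : ℤ)) 1) using hbound
  exact ⟨p, by simpa using hlen, rfl⟩

def IsPrimeDAP (p : List ℤ) : Prop :=
  IsDAP p ∧ ∀ i, 0 < i → i < p.length → 0 < (p.take i).sum

theorem IsPrimeDAP.eq_of_append_eq {a a' b b' : List ℤ} (ha : IsPrimeDAP a)
    (ha' : IsPrimeDAP a') (h : a ++ b = a' ++ b') : a = a' := by
  wlog hle : a.length ≤ a'.length generalizing a a' b b'
  · exact (this ha' ha h.symm (by omega)).symm
  rcases hle.lt_or_eq with hlt | heq
  · have htake : a'.take a.length = a := by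
      simpa [List.take_append_of_le_length hlt.le] using congrArg (List.take a.length) h.symm
    have hpos := ha'.2 a.length (List.length_pos_iff.2 ha.1.1) hlt
    rw [htake, ha.1.2.2.1] at hpos
    exact absurd hpos (lt_irrefl 0)
  · exact (List.append_inj h heq).1

theorem IsPrimeDAP.isDAP_append {a b : List ℤ} (ha : IsPrimeDAP a) (hb : b = [] ∨ IsDAP b) :
    IsDAP (a ++ b) := by
  obtain ⟨hbsteps, hbsum, hbpre⟩ := eq_nil_or_isDAP_iff.1 hb
  obtain ⟨hne, hasteps, hasum, hapre⟩ := ha.1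
  refine ⟨by simp [hne], goodSteps_append.2 ⟨hasteps, hbsteps, fun x _ y hy => Or.inr ?_⟩,
    by simp [hasum, hbsum], fun i => ?_⟩
  · rcases hb with rfl | hb
    · simp at hy
    · obtain ⟨t, rfl⟩ := hb.exists_eq_one_cons
      simpa using hy.symm
  · rw [List.take_append, List.sum_append]
    exact add_nonneg (hapre i) (hbpre _)

theorem IsDAP.exists_prime_append {p : List ℤ} (hp : IsDAP p) :
    ∃ a b, IsPrimeDAP a ∧ (b = [] ∨ IsDAP b) ∧ a ++ b = p := by
  classical
  obtain ⟨hne, hsteps, hsum, hpre⟩ := hp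
  have hlen : 0 < p.length ∧ (p.take p.length).sum = 0 :=
    ⟨List.length_pos_iff.2 hne, by rw [List.take_length]; exact hsum⟩
  have hex : ∃ r, 0 < r ∧ (p.take r).sum = 0 := ⟨p.length, hlen⟩
  obtain ⟨hr0, hr⟩ := Nat.find_spec hex
  have hrle : Nat.find hex ≤ p.length := Nat.find_min' hex hlen
  have hsplit := List.take_append_drop (Nat.find hex) p
  obtain ⟨hsteps₁, hsteps₂, -⟩ := goodSteps_append.1 (hsplit ▸ hsteps)
  refine ⟨p.take (Nat.find hex), p.drop (Nat.find hex), ⟨⟨?_, hsteps₁, hr, ?_⟩, ?_⟩,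
    eq_nil_or_isDAP_iff.2 ⟨hsteps₂, ?_, ?_⟩, hsplit⟩
  · rw [← List.length_pos_iff, List.length_take]
    omega
  · intro i
    rw [List.take_take]
    exact hpre _
  · intro i hi0 hir
    rw [List.length_take, lt_min_iff] at hir
    rw [List.take_take, min_eq_left hir.1.le]
    exact (hpre i).lt_of_ne fun h => Nat.find_min hex hir.1 ⟨hi0, h.symm⟩
  · have := congrArg List.sum hsplit
    rw [List.sum_append, hr, hsum] at this
    omega
  · intro i
    have := hpre (Nat.find hex + i)
    rwa [List.take_add, List.sum_append, hr, zero_add] at this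

theorem isDAP_iff_exists_prime_append {p : List ℤ} :
    IsDAP p ↔ ∃ a b, IsPrimeDAP a ∧ (b = [] ∨ IsDAP b) ∧ a ++ b = p :=
  ⟨IsDAP.exists_prime_append, fun ⟨_, _, ha, hb, h⟩ => h ▸ ha.isDAP_append hb⟩

theorem goodSteps_singleton {s : ℤ} : GoodSteps [s] ↔ s = 1 ∨ s ≤ -1 :=
  ⟨fun h => h.1 s (List.mem_singleton_self s),
    fun h => ⟨fun _ ht => List.eq_of_mem_singleton ht ▸ h, List.isChain_singleton s⟩⟩

theorem goodSteps_one_cons {l : List ℤ} : GoodSteps (1 :: l) ↔ GoodSteps l := by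
  rw [← List.singleton_append, goodSteps_append]
  exact ⟨fun h => h.2.1, fun h => ⟨goodSteps_singleton.2 (Or.inl rfl), h,
    fun x hx _ _ => Or.inl (by simpa using hx.symm)⟩⟩

theorem GoodSteps.concat_of_ne_one {α : List ℤ} {a b : ℤ} (h : GoodSteps (α ++ [a]))
    (ha : a ≠ 1) (hb : b ≤ -1) : GoodSteps (α ++ [b]) := by
  obtain ⟨hα, -, hjoin⟩ := goodSteps_append.1 h
  exact goodSteps_append.2 ⟨hα, goodSteps_singleton.2 (Or.inr hb),
    fun x hx _ _ => Or.inl ((hjoin x hx a rfl).resolve_right ha)⟩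

theorem sum_take_concat_nonneg {α : List ℤ} {b : ℤ}
    (hα : ∀ i ≤ α.length, 0 ≤ (α.take i).sum) (hsum : α.sum + b = 0) (i : ℕ) :
    0 ≤ ((α ++ [b]).take i).sum := by
  rcases le_or_gt i α.length with hi | hi
  · rw [List.take_append_of_le_length hi]
    exact hα i hi
  · rw [List.take_of_length_le (by simp; omega), List.sum_append, List.sum_singleton, hsum]

def liftPath (q : List ℤ) : List ℤ := 1 :: q.modifyLast (· - 1)

theorem liftPath_concat (α : List ℤ) (a : ℤ) :
    liftPath (α ++ [a]) = (1 :: α) ++ [a - 1] := by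
  simp [liftPath, List.modifyLast_concat]

theorem length_liftPath {q : List ℤ} (hq : q ≠ []) : (liftPath q).length = q.length + 1 := by
  obtain ⟨α, a, rfl⟩ := (List.eq_nil_or_concat' q).resolve_left hq
  simp [liftPath_concat]

theorem liftPath_injOn : Set.InjOn liftPath {q | q ≠ []} := by
  intro q hq q' hq' h
  obtain ⟨α, a, rfl⟩ := (List.eq_nil_or_concat' q).resolve_left hq
  obtain ⟨α', a', rfl⟩ := (List.eq_nil_or_concat' q').resolve_left hq'
  rw [liftPath_concat, liftPath_concat] at h
  obtain ⟨hα, ha⟩ := List.append_inj' h rfl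
  simp_all

theorem isPrimeDAP_one_neg_one : IsPrimeDAP [1, -1] := by
  refine ⟨⟨by simp, ⟨by simp, List.isChain_pair.2 (Or.inl rfl)⟩, by simp, fun i => ?_⟩,
    ?_⟩
  · rcases i with _ | _ | i <;> simp
  · intro i hi0 hi2
    obtain rfl : i = 1 := by simp at hi2; omega
    simp

theorem IsDAP.isPrimeDAP_liftPath {q : List ℤ} (hq : IsDAP q) : IsPrimeDAP (liftPath q) := by
  obtain ⟨α, a, rfl, ha⟩ := hq.exists_eq_concat
  obtain ⟨-, hsteps, hsum, hpre⟩ := hq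
  simp only [List.sum_append, List.sum_singleton] at hsum
  have hpos : ∀ i ≤ α.length + 1, 0 < i → 0 < ((1 :: α).take i).sum := by
    rintro (_ | j) hj hj0
    · omega
    · have := hpre j
      rw [List.take_append_of_le_length (by omega)] at this
      simp only [List.take_succ_cons, List.sum_cons]
      omega
  rw [liftPath_concat]
  refine ⟨⟨by simp, ?_, by simp; omega, sum_take_concat_nonneg ?_ (by simp; omega)⟩, ?_⟩
  · rw [List.cons_append, goodSteps_one_cons]
    exact hsteps.concat_of_ne_one (by omega) (by omega)
  · intro i hi
    rcases i.eq_zero_or_pos with rfl | hi0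
    · simp
    · exact (hpos i (by simpa using hi) hi0).le
  · intro i hi0 hi
    rw [List.take_append_of_le_length (by simp at hi ⊢; omega)]
    exact hpos i (by simp at hi; omega) hi0

theorem IsPrimeDAP.eq_or_exists_liftPath {p : List ℤ} (hp : IsPrimeDAP p) :
    p = [1, -1] ∨ ∃ q, IsDAP q ∧ liftPath q = p := by
  obtain ⟨t, rfl⟩ := hp.1.exists_eq_one_cons
  obtain ⟨⟨-, hsteps, hsum, -⟩, hint⟩ := hp
  obtain ⟨α, a, rfl⟩ := (List.eq_nil_or_concat' t).resolve_left (by rintro rfl; simp at hsum)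
  rw [goodSteps_one_cons] at hsteps
  simp only [List.sum_cons, List.sum_append, List.sum_nil] at hsum
  have hα : ∀ j ≤ α.length, 0 ≤ (α.take j).sum := by
    intro j hj
    have := hint (j + 1) (by omega) (by simp; omega)
    rw [List.take_succ_cons, List.take_append_of_le_length hj, List.sum_cons] at this
    omega
  have ha : a ≤ -1 := by
    have := hα α.length le_rfl
    rw [List.take_length] at this
    omega
  rcases List.eq_nil_or_concat' α with rfl | ⟨β, c, rfl⟩
  · left
    simp only [List.sum_nil] at hsum
    simp only [List.nil_append, List.cons.injEq, and_true, true_and]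
    omega
  · right
    -- the step before `a` is `U`, so `a = -1` would return to the axis one step early
    have hc : c = 1 := by
      obtain ⟨-, -, hjoin⟩ := goodSteps_append.1 hsteps
      exact (hjoin c (by simp) a rfl).resolve_right (by omega)
    have hβ := hα β.length (by simp)
    simp only [List.take_left] at hβ
    simp only [List.sum_append, List.sum_cons, List.sum_nil] at hsum
    refine ⟨β ++ [c] ++ [a + 1], ⟨by simp, hsteps.concat_of_ne_one (by omega) (by omega),
      by simp; omega, sum_take_concat_nonneg hα (by simp; omega)⟩, ?_⟩
    rw [liftPath_concat]
    simp

theorem isPrimeDAP_iff {p : List ℤ} :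
    IsPrimeDAP p ↔ p = [1, -1] ∨ ∃ q, IsDAP q ∧ liftPath q = p := by
  refine ⟨IsPrimeDAP.eq_or_exists_liftPath, ?_⟩
  rintro (rfl | ⟨q, hq, rfl⟩)
  · exact isPrimeDAP_one_neg_one
  · exact hq.isPrimeDAP_liftPath

theorem IsDAP.liftPath_ne {q : List ℤ} (hq : IsDAP q) : liftPath q ≠ [1, -1] := by
  obtain ⟨α, a, rfl, ha⟩ := hq.exists_eq_concat
  rw [liftPath_concat]
  intro h
  simp only [List.cons_append, List.cons.injEq, true_and] at h
  have hlast := (List.append_inj' (h.trans (List.nil_append _).symm) rfl).2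
  simp only [List.cons.injEq, and_true] at hlast
  omega

theorem finiteByLength_eq_nil_or_isDAP : FiniteByLength fun p : List ℤ => p = [] ∨ IsDAP p :=
  finiteByLength_of_sum_take_nonneg.mono fun p hp => by
    obtain ⟨hsteps, -, hpre⟩ := eq_nil_or_isDAP_iff.1 hp
    exact ⟨fun s hs => by rcases hsteps.1 s hs with h | h <;> omega, hpre⟩

theorem finiteByLength_isPrimeDAP : FiniteByLength IsPrimeDAP :=
  finiteByLength_eq_nil_or_isDAP.mono fun _ hp => Or.inr hp.1

theorem lengthGF_isDAP : lengthGF IsDAP = Aps := rfl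

theorem lengthGF_eq_nil_or_isDAP : lengthGF (fun p : List ℤ => p = [] ∨ IsDAP p) = 1 + Aps := by
  rw [lengthGF_eq_add (S := (· = [])) (T := IsDAP) (fun _ => Iff.rfl)
    (fun _ hp hp' => hp'.1 hp) finiteByLength_eq_nil_or_isDAP, lengthGF_eq_X_pow, lengthGF_isDAP,
    List.length_nil, pow_zero]

theorem lengthGF_isPrimeDAP : lengthGF IsPrimeDAP = X ^ 2 + X * Aps := by
  rw [lengthGF_eq_add (S := (· = [1, -1])) (fun _ => isPrimeDAP_iff)
      (fun _ hp ⟨_, hq, hqp⟩ => hq.liftPath_ne (hqp.trans hp)) finiteByLength_isPrimeDAP,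
    lengthGF_eq_X_pow, lengthGF_image liftPath 1 (liftPath_injOn.mono fun _ hq => hq.1)
      (fun _ hq => length_liftPath hq.1), lengthGF_isDAP, pow_one]
  rfl

theorem aps_eq_mul : Aps = (X ^ 2 + X * Aps) * (1 + Aps) := by
  rw [← lengthGF_isPrimeDAP, ← lengthGF_eq_nil_or_isDAP, ← lengthGF_isDAP]
  exact lengthGF_eq_mul (fun _ => isDAP_iff_exists_prime_append)
    (fun _ _ _ _ ha _ ha' _ h => ha.eq_of_append_eq ha' h)
    finiteByLength_isPrimeDAP finiteByLength_eq_nil_or_isDAP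

/-- `A(x)` satisfies `x A² + (x² + x - 1) A + x² = 0`
(equivalently `A = (1 - x - x² - √(x⁴-2x³-x²-2x+1))/(2x)`). -/
theorem stmt3 : X * Aps ^ 2 + (X ^ 2 + X - 1) * Aps + X ^ 2 = 0 := by
  linear_combination (-1 : PowerSeries ℚ) * aps_eq_mul
end

section
/- Partial GDAP of length n-1 ending at ordinate -1 are in one-to-one correspondence with nonempty GDAP of length n starting with an up-step, via the map that appends an up-step at the end, reflects the path about the x-axis, and takes the mirror image. -/
open PowerSeries

def IsPartialGDAP (p : List ℤ) : Prop := GoodSteps p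

def reflectPath (p : List ℤ) : List ℤ := p.map fun s => -s

def mirrorPath (p : List ℤ) : List ℤ := (p.map fun s => -s).reverse

lemma mirrorPath_reflectPath (p : List ℤ) : mirrorPath (reflectPath p) = p.reverse := by
  simp [mirrorPath, reflectPath]

lemma goodSteps_reverse_iff {p : List ℤ} : GoodSteps p.reverse ↔ GoodSteps p := by
  refine and_congr (by simp only [List.mem_reverse]) (List.isChain_reverse.trans ?_)
  simp only [or_comm]
  rfl

lemma goodSteps_one_cons_iff {p : List ℤ} : GoodSteps (1 :: p) ↔ GoodSteps p :=
  and_congr (by simp) (List.isChain_cons.trans (and_iff_right fun _ _ => Or.inl rfl))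

/-- for `n ≥ 1`, the map appending an up-step, reflecting about the
x-axis and taking the mirror image is a bijection from partial GDAP of length `n-1`
ending at ordinate `-1` onto nonempty GDAP of length `n` starting with an up-step. -/
theorem stmt7 : ∀ n : ℕ, 1 ≤ n →
    Set.BijOn (fun p => mirrorPath (reflectPath (p ++ [1])))
      {p : List ℤ | IsPartialGDAP p ∧ p.length = n - 1 ∧ p.sum = -1}
      {q : List ℤ | IsGDAP q ∧ q ≠ [] ∧ q.head? = some 1 ∧ q.length = n} := by
  intro n hn
  -- reflecting and then mirroring just reverses, so the map is `p ↦ 1 :: p.reverse`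
  simp only [mirrorPath_reflectPath, List.reverse_append, List.reverse_singleton,
    List.singleton_append]
  refine ⟨?_, ?_, ?_⟩
  · rintro p ⟨hp, hlen, hsum⟩
    refine ⟨⟨goodSteps_one_cons_iff.mpr (goodSteps_reverse_iff.mpr hp), ?_⟩, by simp, rfl, ?_⟩
    · simp [hsum]
    · simp only [List.length_cons, List.length_reverse, hlen]; omega
  · intro p _ q _ h
    simpa using h
  · rintro (_ | ⟨a, t⟩) ⟨⟨hq, hsum⟩, hne, hhead, hlen⟩
    · exact absurd rfl hne
    obtain rfl : a = 1 := by simpa using hhead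
    refine ⟨t.reverse, ⟨goodSteps_reverse_iff.mpr (goodSteps_one_cons_iff.mp hq), ?_, ?_⟩, by simp⟩
    · simp only [List.length_cons, List.length_reverse] at hlen ⊢; omega
    · simp only [List.sum_cons, List.sum_reverse] at hsum ⊢; omega
end

section
/- The bivariate generating function f(u) = sum_{k >= m+1} u^k f_k for partial GDAP bounded below by y = m and ending with an up-step at ordinate k satisfies f(u) = (1 - u + x^2 u^{m+1} f(1)) / (1 - u - xu + xu^2 + x^2 u), where f_0 also counts the empty path. -/
open PowerSeries

/-- The path never goes strictly below the line `y = m`. -/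
def BoundedBelow (m : ℤ) (p : List ℤ) : Prop := ∀ i, m ≤ (p.take i).sum

/-- Number of partial GDAP bounded below by `y = m`, of length `n`, ending at ordinate `k`
with an up-step (the empty path being counted for `k = 0`). -/
noncomputable def fCount (m k : ℤ) (n : ℕ) : ℕ :=
  Nat.card {p : List ℤ // GoodSteps p ∧ BoundedBelow m p ∧ p.length = n ∧ p.sum = k ∧
    (p = [] ∨ p.getLast? = some 1)}

/-- The generating function `f_k(x)`. -/
noncomputable def fSeries (m k : ℤ) : PowerSeries ℚ := PowerSeries.mk fun n => (fCount m k n : ℚ)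

/-- `f(1) = ∑_k f_k`: the generating function of all partial GDAP bounded below by `y = m`
ending with an up-step (plus the empty path). -/
noncomputable def fOne (m : ℤ) : PowerSeries ℚ :=
  PowerSeries.mk fun n => (Nat.card {p : List ℤ // GoodSteps p ∧ BoundedBelow m p ∧
    p.length = n ∧ (p = [] ∨ p.getLast? = some 1)} : ℚ)

/-- `u^{-m} f(u) = ∑_{k ≥ m+1} u^{k-m} f_k`, as a power series in `u` (outer variable)
with coefficients power series in `x` (inner variable); the coefficient of `u^j` is
`f_{m+j}` (note `f_m = 0`). -/
noncomputable def bigF (m : ℤ) : PowerSeries (PowerSeries ℚ) :=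
  PowerSeries.mk fun j => fSeries m (m + j)

/-!
Splitting off the last step of a path gives `f_k = [k = 0] + x (f_{k-1} + g_{k-1})` for every `k`,
and, for `k ≥ m`, `g_k = x ∑_{i > k} f_i`: a final down-step can bring any up-ending path that
ends above `k` down to `k`. The tail sum at `i = m` is `f(1)`, so eliminating the `g_k` yields the
recurrence `f_k - (1 + x - x²) f_{k-1} + x f_{k-2} = [k = 0] - [k = 1] + [k = m + 1] x² f(1)`.
Since `f_k = 0` for `k < m`, it holds for every `k ∈ ℤ`; comparing coefficients of `u^{k-m}` gives
the theorem.
-/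

lemma List.finite_length_eq_of_forall_mem {α : Type*} {s : Set α} (hs : s.Finite) (n : ℕ) :
    {l : List α | l.length = n ∧ ∀ x ∈ l, x ∈ s}.Finite := by
  have := hs.to_subtype
  refine ((List.finite_length_eq s n).image (List.map (↑))).subset ?_
  rintro l ⟨hl, hmem⟩
  lift l to List s using hmem
  exact ⟨l, by simpa using hl, rfl⟩

lemma Nat.card_subtype_or_of_disjoint {α : Type*} {p q : α → Prop} (h : ∀ x, p x → ¬q x)
    [Finite {x // p x}] [Finite {x // q x}] :
    Nat.card {x // p x ∨ q x} = Nat.card {x // p x} + Nat.card {x // q x} := by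
  classical
  rw [← Nat.card_sum]
  exact Nat.card_congr (subtypeOrEquiv p q (Pi.disjoint_iff.2 fun x =>
    Prop.disjoint_iff.2 fun hx => h x hx.1 hx.2))

lemma List.dropLast_append_sum_sub_sum {α : Type*} [AddCommGroup α] {p : List α} (hp : p ≠ []) :
    p.dropLast ++ [p.sum - p.dropLast.sum] = p := by
  obtain ⟨q, c, rfl⟩ : ∃ q c, p = q ++ [c] := ⟨_, _, (List.dropLast_append_getLast hp).symm⟩
  simp

lemma List.exists_eq_append_singleton_of_length_eq_add_one {α : Type*} {p : List α} {n : ℕ}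
    (hl : p.length = n + 1) : ∃ q c, p = q ++ [c] :=
  ⟨_, _, (List.dropLast_append_getLast (List.ne_nil_of_length_eq_add_one hl)).symm⟩

lemma PowerSeries.mk_mul_X_pow_of_eq_zero {R : Type*} [Semiring R] (φ : ℤ → R) {c : ℤ}
    (hφ : ∀ k < c, φ k = 0) (d : ℕ) :
    mk (fun j : ℕ => φ (c + j)) * X ^ d = mk fun j : ℕ => φ (c + j - d) := by
  ext j
  rw [coeff_mul_X_pow', coeff_mk, coeff_mk]
  split_ifs with hd
  · push_cast [hd]
    ring_nf
  · exact (hφ _ (by omega)).symm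

def EndsUp (p : List ℤ) : Prop := p = [] ∨ p.getLast? = some 1

noncomputable def gCount (m k : ℤ) (n : ℕ) : ℕ :=
  Nat.card {p : List ℤ // GoodSteps p ∧ BoundedBelow m p ∧ p.length = n ∧ p.sum = k ∧ ¬EndsUp p}

noncomputable def gSeries (m k : ℤ) : PowerSeries ℚ := mk fun n => (gCount m k n : ℚ)

noncomputable def fTailCount (m s : ℤ) (n : ℕ) : ℕ :=
  Nat.card {p : List ℤ // GoodSteps p ∧ BoundedBelow m p ∧ p.length = n ∧ s ≤ p.sum ∧ EndsUp p}

noncomputable def fTailSeries (m s : ℤ) : PowerSeries ℚ := mk fun n => (fTailCount m s n : ℚ)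

section Paths

variable {m : ℤ} {p q : List ℤ} {c : ℤ}

lemma BoundedBelow.le_sum (h : BoundedBelow m p) : m ≤ p.sum := by
  simpa using h p.length

lemma boundedBelow_append_singleton :
    BoundedBelow m (q ++ [c]) ↔ BoundedBelow m q ∧ m ≤ q.sum + c := by
  constructor
  · intro h
    refine ⟨fun i => ?_, by simpa using h (q.length + 1)⟩
    rcases le_total i q.length with hi | hi
    · simpa [List.take_append_of_le_length hi] using h i
    · simpa [List.take_of_length_le hi] using h q.length
  · rintro ⟨hq, hc⟩ i
    rcases le_or_gt i q.length with hi | hi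
    · simpa [List.take_append_of_le_length hi] using hq i
    · simpa [List.take_of_length_le (show (q ++ [c]).length ≤ i by simpa)] using hc

lemma goodSteps_append_singleton :
    GoodSteps (q ++ [c]) ↔ GoodSteps q ∧ (c = 1 ∨ c ≤ -1) ∧ (c = 1 ∨ EndsUp q) := by
  have hlast : (∀ x ∈ q.getLast?, ∀ y ∈ [c].head?, x = 1 ∨ y = 1) ↔ (c = 1 ∨ EndsUp q) := by
    rcases hq : q.getLast? with _ | a
    · simp [EndsUp, List.getLast?_eq_none_iff.1 hq]
    · have : q ≠ [] := by rintro rfl; simp at hq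
      simp [EndsUp, this, hq, or_comm]
  rw [GoodSteps, GoodSteps, List.Chain', List.isChain_append, hlast, List.forall_mem_append,
    List.forall_mem_singleton]
  simp only [List.isChain_singleton, true_and]
  tauto

lemma GoodSteps.mem_Icc (hg : GoodSteps p) (hb : BoundedBelow m p) :
    ∀ x ∈ p, x ∈ Set.Icc (m - p.length) 1 := by
  intro x hx
  obtain ⟨i, hi, rfl⟩ := List.mem_iff_getElem.mp hx
  refine ⟨?_, (hg.1 _ hx).elim le_of_eq fun h => h.trans (by norm_num)⟩
  have hup : (p.take i).sum ≤ (p.take i).length := by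
    simpa using List.sum_le_card_nsmul (p.take i) 1 fun x hx =>
      (hg.1 x (List.mem_of_mem_take hx)).elim le_of_eq fun h => h.trans (by norm_num)
  have hlen : (p.take i).length ≤ p.length := List.length_take_le' _ _
  have := hb (i + 1)
  rw [List.sum_take_succ p i hi] at this
  omega

lemma finite_setOf_goodSteps_boundedBelow_length_eq (m : ℤ) (n : ℕ) :
    {p : List ℤ | GoodSteps p ∧ BoundedBelow m p ∧ p.length = n}.Finite :=
  (List.finite_length_eq_of_forall_mem (Set.finite_Icc (m - n) 1) n).subset
    fun _ ⟨hg, hb, hl⟩ => ⟨hl, hl ▸ hg.mem_Icc hb⟩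

instance instFiniteBoundedPaths (m : ℤ) (n : ℕ) (R : List ℤ → Prop) :
    Finite {p : List ℤ // GoodSteps p ∧ BoundedBelow m p ∧ p.length = n ∧ R p} :=
  ((finite_setOf_goodSteps_boundedBelow_length_eq m n).subset
    fun _ hp => ⟨hp.1, hp.2.1, hp.2.2.1⟩).to_subtype

end Paths

lemma EndsUp.dropLast_append_one {p : List ℤ} (h : EndsUp p) (hp : p ≠ []) :
    p.dropLast ++ [1] = p :=
  List.dropLast_append_getLast? 1 (h.resolve_left hp)

lemma endsUp_append_singleton {q : List ℤ} {c : ℤ} : EndsUp (q ++ [c]) ↔ c = 1 := by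
  simp [EndsUp]

def appendUpEquiv (m k : ℤ) (n : ℕ) :
    {q : List ℤ // GoodSteps q ∧ BoundedBelow m q ∧ q.length = n ∧ q.sum = k - 1} ≃
    {p : List ℤ // GoodSteps p ∧ BoundedBelow m p ∧ p.length = n + 1 ∧ p.sum = k ∧ EndsUp p} where
  toFun q := ⟨q.1 ++ [1], by
    obtain ⟨hg, hb, hl, hs⟩ := q.2
    exact ⟨goodSteps_append_singleton.2 ⟨hg, by simp⟩,
      boundedBelow_append_singleton.2 ⟨hb, by linarith [hb.le_sum]⟩, by simp [hl], by simp [hs],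
      endsUp_append_singleton.2 rfl⟩⟩
  invFun p := ⟨p.1.dropLast, by
    obtain ⟨hg, hb, hl, hs, hup⟩ := p.2
    obtain ⟨q, c, hqc⟩ := List.exists_eq_append_singleton_of_length_eq_add_one hl
    rw [hqc] at hg hb hl hs hup ⊢
    obtain rfl := endsUp_append_singleton.1 hup
    simp only [List.sum_append, List.sum_singleton, List.length_append, List.length_singleton]
      at hs hl
    simp only [List.dropLast_concat]
    exact ⟨(goodSteps_append_singleton.1 hg).1, (boundedBelow_append_singleton.1 hb).1, by omega,
      by omega⟩⟩
  left_inv q := Subtype.ext (List.dropLast_concat ..)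
  right_inv p := Subtype.ext (p.2.2.2.2.2.dropLast_append_one
    (List.ne_nil_of_length_eq_add_one p.2.2.2.1))

def appendDownEquiv {m k : ℤ} (hk : m ≤ k) (n : ℕ) :
    {q : List ℤ // GoodSteps q ∧ BoundedBelow m q ∧ q.length = n ∧ k + 1 ≤ q.sum ∧ EndsUp q} ≃
    {p : List ℤ // GoodSteps p ∧ BoundedBelow m p ∧ p.length = n + 1 ∧ p.sum = k ∧ ¬EndsUp p} where
  toFun q := ⟨q.1 ++ [k - q.1.sum], by
    obtain ⟨hg, hb, hl, hs, hup⟩ := q.2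
    exact ⟨goodSteps_append_singleton.2 ⟨hg, by omega, Or.inr hup⟩,
      boundedBelow_append_singleton.2 ⟨hb, by omega⟩, by simp [hl], by simp,
      fun h => by have := endsUp_append_singleton.1 h; omega⟩⟩
  invFun p := ⟨p.1.dropLast, by
    obtain ⟨hg, hb, hl, hs, hdown⟩ := p.2
    obtain ⟨q, c, hqc⟩ := List.exists_eq_append_singleton_of_length_eq_add_one hl
    rw [hqc] at hg hb hl hs hdown ⊢
    rw [endsUp_append_singleton] at hdown
    obtain ⟨hg, hc, hup⟩ := goodSteps_append_singleton.1 hg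
    obtain ⟨hb, -⟩ := boundedBelow_append_singleton.1 hb
    simp only [List.sum_append, List.sum_singleton, List.length_append, List.length_singleton]
      at hs hl
    simp only [List.dropLast_concat]
    exact ⟨hg, hb, by omega, by omega, hup.resolve_left hdown⟩⟩
  left_inv q := Subtype.ext (List.dropLast_concat ..)
  right_inv p := Subtype.ext (by
    simpa [p.2.2.2.2.1] using
      List.dropLast_append_sum_sub_sum (List.ne_nil_of_length_eq_add_one p.2.2.2.1))

section Counting

variable {m k s : ℤ} {n : ℕ}

lemma fCount_succ : fCount m k (n + 1) = fCount m (k - 1) n + gCount m (k - 1) n := by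
  refine (Nat.card_congr (appendUpEquiv m k n)).symm.trans ?_
  rw [fCount, gCount, ← Nat.card_subtype_or_of_disjoint fun _ h h' => h'.2.2.2.2 h.2.2.2.2]
  exact Nat.card_congr (Equiv.subtypeEquivRight fun p => by tauto)

lemma gCount_succ (hk : m ≤ k) : gCount m k (n + 1) = fTailCount m (k + 1) n :=
  (Nat.card_congr (appendDownEquiv hk n)).symm

lemma fTailCount_eq_fCount_add : fTailCount m s n = fCount m s n + fTailCount m (s + 1) n := by
  rw [fTailCount, fCount, fTailCount,
    ← Nat.card_subtype_or_of_disjoint fun _ h h' => by have := h'.2.2.2.1; omega]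
  refine Nat.card_congr (Equiv.subtypeEquivRight fun p => ?_)
  constructor
  · rintro ⟨hg, hb, hl, hs, hup⟩
    rcases hs.eq_or_lt with hs | hs
    exacts [Or.inl ⟨hg, hb, hl, hs.symm, hup⟩, Or.inr ⟨hg, hb, hl, hs, hup⟩]
  · rintro (⟨hg, hb, hl, hs, hup⟩ | ⟨hg, hb, hl, hs, hup⟩)
    exacts [⟨hg, hb, hl, hs.ge, hup⟩, ⟨hg, hb, hl, by omega, hup⟩]

lemma fCount_zero (hm : m ≤ 0) : fCount m k 0 = if k = 0 then 1 else 0 := by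
  have hnil (p : {p : List ℤ // GoodSteps p ∧ BoundedBelow m p ∧ p.length = 0 ∧ p.sum = k ∧
      EndsUp p}) : p.1 = [] :=
    List.length_eq_zero_iff.1 p.2.2.2.1
  split_ifs with hk
  · subst hk
    exact Nat.card_eq_one_iff_unique.2 ⟨⟨fun p q => Subtype.ext ((hnil p).trans (hnil q).symm)⟩,
      ⟨⟨[], ⟨by simp, List.isChain_nil⟩, fun _ => by simpa using hm, rfl, rfl, Or.inl rfl⟩⟩⟩
  · exact Nat.card_eq_zero.2 (Or.inl ⟨fun p => hk (by simpa [hnil p] using p.2.2.2.2.1.symm)⟩)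

lemma gCount_zero : gCount m k 0 = 0 :=
  Nat.card_eq_zero.2 (Or.inl ⟨fun p => p.2.2.2.2.2 (Or.inl (List.length_eq_zero_iff.1 p.2.2.2.1))⟩)

lemma fCount_eq_zero_of_lt (hk : k < m) : fCount m k n = 0 :=
  Nat.card_eq_zero.2 (Or.inl ⟨fun p => (p.2.2.1.le_sum.trans_eq p.2.2.2.2.1).not_gt hk⟩)

lemma gCount_eq_zero_of_lt (hk : k < m) : gCount m k n = 0 :=
  Nat.card_eq_zero.2 (Or.inl ⟨fun p => (p.2.2.1.le_sum.trans_eq p.2.2.2.2.1).not_gt hk⟩)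

end Counting

section Series

variable {m k : ℤ}

lemma fSeries_eq_add_X_mul (hm : m ≤ 0) (k : ℤ) :
    fSeries m k = (if k = 0 then 1 else 0) + X * (fSeries m (k - 1) + gSeries m (k - 1)) := by
  ext (_ | n)
  · split_ifs <;> simp [fSeries, fCount_zero hm, *]
  · split_ifs <;> simp [fSeries, gSeries, fCount_succ, coeff_succ_X_mul, coeff_one]

lemma gSeries_eq_X_mul (hk : m ≤ k) : gSeries m k = X * fTailSeries m (k + 1) := by
  ext (_ | n) <;> simp [gSeries, fTailSeries, gCount_zero, gCount_succ hk, coeff_succ_X_mul]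

lemma fTailSeries_eq_fSeries_add (m s : ℤ) :
    fTailSeries m s = fSeries m s + fTailSeries m (s + 1) := by
  ext n
  simp only [fTailSeries, fSeries, coeff_mk, map_add]
  rw [fTailCount_eq_fCount_add, Nat.cast_add]

lemma fOne_eq_fTailSeries (m : ℤ) : fOne m = fTailSeries m m := by
  ext n
  simp only [fOne, fTailSeries, coeff_mk, fTailCount]
  congr 1
  exact Nat.card_congr (Equiv.subtypeEquivRight fun p =>
    ⟨fun ⟨hg, hb, hl, hup⟩ => ⟨hg, hb, hl, hb.le_sum, hup⟩,
      fun ⟨hg, hb, hl, _, hup⟩ => ⟨hg, hb, hl, hup⟩⟩)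

lemma fSeries_eq_zero_of_lt (hk : k < m) : fSeries m k = 0 := by
  ext n
  simp [fSeries, fCount_eq_zero_of_lt hk]

lemma gSeries_eq_zero_of_lt (hk : k < m) : gSeries m k = 0 := by
  ext n
  simp [gSeries, gCount_eq_zero_of_lt hk]

theorem fSeries_recurrence (hm : m ≤ 0) (k : ℤ) :
    fSeries m k - (1 + X - X ^ 2) * fSeries m (k - 1) + X * fSeries m (k - 2) =
      (if k = 0 then 1 else 0) - (if k = 1 then 1 else 0) +
        if k = m + 1 then X ^ 2 * fOne m else 0 := by
  have hf := fSeries_eq_add_X_mul hm k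
  rcases lt_trichotomy k (m + 1) with hk | rfl | hk
  · rw [fSeries_eq_zero_of_lt (by omega : k - 1 < m), gSeries_eq_zero_of_lt (by omega)] at hf
    rw [fSeries_eq_zero_of_lt (by omega : k - 1 < m), fSeries_eq_zero_of_lt (by omega : k - 2 < m),
      if_neg (by omega : k ≠ 1), if_neg (by omega : k ≠ m + 1)]
    linear_combination hf
  · have hfm := fSeries_eq_add_X_mul hm m
    rw [fSeries_eq_zero_of_lt (by omega : m - 1 < m), gSeries_eq_zero_of_lt (by omega)] at hfm
    rw [add_sub_cancel_right, gSeries_eq_X_mul le_rfl] at hf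
    rw [show m + 1 - 2 = m - 1 by ring, fSeries_eq_zero_of_lt (by omega : m - 1 < m),
      add_sub_cancel_right, if_pos rfl, fOne_eq_fTailSeries, fTailSeries_eq_fSeries_add]
    simp only [show (m + 1 = 1 ↔ m = 0) by omega]
    linear_combination hf - hfm
  · have hf' := fSeries_eq_add_X_mul hm (k - 1)
    rw [show k - 1 - 1 = k - 2 by ring] at hf'
    simp only [sub_eq_zero] at hf'
    rw [gSeries_eq_X_mul (by omega), sub_add_cancel] at hf
    rw [gSeries_eq_X_mul (by omega), show k - 2 + 1 = k - 1 by ring] at hf'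
    rw [if_neg (by omega : k ≠ m + 1)]
    have hu := fTailSeries_eq_fSeries_add m (k - 1)
    rw [sub_add_cancel] at hu
    linear_combination hf - hf' - X ^ 2 * hu

end Series

/-- `f(u) = (1 - u + x² u^{m+1} f(1))/(1 - u - xu + xu² + x²u)`, stated
after multiplying both sides by `u^{-m}` and clearing the denominator:
`u^{-m} f(u) · (1 - u - xu + xu² + x²u) = u^{-m}(1 - u) + x² u f(1)`. -/
theorem stmt8 : ∀ m : ℤ, m ≤ 0 →
    bigF m *
      (1 - X - C (R := PowerSeries ℚ) X * X + C (R := PowerSeries ℚ) X * X ^ 2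
        + (C (R := PowerSeries ℚ) X) ^ 2 * X) =
    X ^ m.natAbs * (1 - X) + (C (R := PowerSeries ℚ) X) ^ 2 * X * C (R := PowerSeries ℚ) (fOne m) := by
  intro m hm
  have hvanish : ∀ k < m, fSeries m k = 0 := fun _ => fSeries_eq_zero_of_lt
  have hsplit : bigF m * (1 - X - C X * X + C X * X ^ 2 + C X ^ 2 * X) =
      bigF m - C (1 + X - X ^ 2) * (bigF m * X ^ 1) + C X * (bigF m * X ^ 2) := by
    simp only [map_sub, map_add, map_one, map_pow]
    ring
  have hrhs : (X : PowerSeries (PowerSeries ℚ)) ^ m.natAbs * (1 - X) + C X ^ 2 * X * C (fOne m) =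
      X ^ m.natAbs - X ^ (m.natAbs + 1) + C (X ^ 2 * fOne m) * X ^ 1 := by
    simp only [map_mul, map_pow]
    ring
  rw [hsplit, hrhs, bigF, mk_mul_X_pow_of_eq_zero _ hvanish, mk_mul_X_pow_of_eq_zero _ hvanish]
  refine PowerSeries.ext fun j => ?_
  have hrec := fSeries_recurrence hm (m + j)
  simp only [LinearMap.map_add, LinearMap.map_sub]
  simp only [coeff_C_mul, coeff_mk, coeff_X_pow, Nat.cast_one, Nat.cast_ofNat,
    mul_ite, mul_one, mul_zero]
  simp only [show j = m.natAbs ↔ m + j = 0 by omega, show j = m.natAbs + 1 ↔ m + j = 1 by omega,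
    show j = 1 ↔ m + j = m + 1 by omega]
  exact hrec
end

section
/- The generating function counting (possibly empty) GDAP that stay between the lines y = -1 and y = 1 by length is 1/(x^4 - x^3 - 2x^2 + 1), with series expansion beginning 1 + 2x^2 + x^3 + 3x^4 + 4x^5 + 5x^6 + 10x^7 + 11x^8 + 21x^9 + 27x^10 + ... -/
open PowerSeries

/-- All points of the path have ordinate in `[-1,1]`. -/
def Bounded11 (p : List ℤ) : Prop := ∀ i, -1 ≤ (p.take i).sum ∧ (p.take i).sum ≤ 1

/-- Number of (possibly empty) GDAP of length `n` bounded by `y = -1` and `y = 1`. -/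
noncomputable def g11Count (n : ℕ) : ℕ :=
  Nat.card {p : List ℤ // IsGDAP p ∧ Bounded11 p ∧ p.length = n}

noncomputable def G11 : PowerSeries ℚ := PowerSeries.mk fun n => (g11Count n : ℚ)

/-!
Read a path step by step with the automaton whose state is the current height together with
whether the last step was a down-step. In the strip `[-1, 1]` only four states are reachable,
`(0, up)`, `(1, up)`, `(-1, down)` and `(0, down)`, and the numbers `a, b, c, d` of their
accepted continuations of length `n` satisfy `a' = b + c`, `b' = c + d`, `c' = a`, `d' = b`.
Eliminating `b, c, d` gives `a (n + 4) + a n = 2 a (n + 2) + a (n + 1)`, which together with the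
initial values `1, 0, 2, 1` says exactly that `(∑ aₙ xⁿ) (x⁴ - x³ - 2x² + 1) = 1`.
-/

def InStrip (lo hi h : ℤ) (p : List ℤ) : Prop :=
  ∀ i, lo ≤ h + (p.take i).sum ∧ h + (p.take i).sum ≤ hi

lemma InStrip.lo_le {lo hi h : ℤ} {p : List ℤ} (H : InStrip lo hi h p) : lo ≤ h := by
  simpa using (H 0).1

lemma InStrip.le_hi {lo hi h : ℤ} {p : List ℤ} (H : InStrip lo hi h p) : h ≤ hi := by
  simpa using (H 0).2

@[simp]
lemma inStrip_nil {lo hi h : ℤ} : InStrip lo hi h [] ↔ lo ≤ h ∧ h ≤ hi := by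
  simp [InStrip]

lemma inStrip_cons {lo hi h s : ℤ} {p : List ℤ} :
    InStrip lo hi h (s :: p) ↔ lo ≤ h ∧ h ≤ hi ∧ InStrip lo hi (h + s) p := by
  constructor
  · intro H
    exact ⟨H.lo_le, H.le_hi, fun i => by simpa [add_assoc] using H (i + 1)⟩
  · rintro ⟨hlo, hhi, H⟩ (_ | i)
    · simpa using ⟨hlo, hhi⟩
    · simpa [add_assoc] using H i

lemma bounded11_iff_inStrip {p : List ℤ} : Bounded11 p ↔ InStrip (-1) 1 0 p := by
  simp [Bounded11, InStrip]

lemma goodSteps_iff {p : List ℤ} :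
    GoodSteps p ↔ (∀ s ∈ p, s = 1 ∨ s ≤ -1) ∧ p.IsChain (fun a b => a = 1 ∨ b = 1) :=
  Iff.rfl

lemma goodSteps_cons {s : ℤ} {p : List ℤ} :
    GoodSteps (s :: p) ↔ (s = 1 ∨ s ≤ -1) ∧ (∀ t ∈ p.head?, s = 1 ∨ t = 1) ∧ GoodSteps p := by
  simp only [goodSteps_iff, List.mem_cons, forall_eq_or_imp, List.isChain_cons]
  tauto

def StripAccepts (lo hi : ℤ) : ℤ → Bool → List ℤ → Prop
  | h, _, [] => h = 0
  | h, afterDown, s :: p =>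
      (s = 1 ∧ h + 1 ≤ hi ∧ StripAccepts lo hi (h + 1) false p) ∨
      (s ≤ -1 ∧ afterDown = false ∧ lo ≤ h + s ∧ StripAccepts lo hi (h + s) true p)

lemma stripAccepts_iff {lo hi h : ℤ} {afterDown : Bool} {p : List ℤ} (hlo : lo ≤ h)
    (hhi : h ≤ hi) :
    StripAccepts lo hi h afterDown p ↔
      GoodSteps p ∧ (afterDown = true → ∀ s ∈ p.head?, s = 1) ∧ h + p.sum = 0 ∧
        InStrip lo hi h p := by
  induction p generalizing h afterDown with
  | nil => simp [StripAccepts, goodSteps_iff, hlo, hhi]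
  | cons s p ih =>
    simp only [StripAccepts, goodSteps_cons, inStrip_cons, List.head?_cons, Option.mem_def,
      Option.some.injEq, forall_eq', List.sum_cons]
    constructor
    · rintro (⟨rfl, hup, hp⟩ | ⟨hs, rfl, hdown, hp⟩)
      · rw [ih (by omega) hup] at hp
        exact ⟨⟨by simp, by simp, hp.1⟩, by simp, by omega, hlo, hhi, hp.2.2.2⟩
      · rw [ih hdown (by omega)] at hp
        exact ⟨⟨Or.inr hs, fun t ht => Or.inr (hp.2.1 rfl t ht), hp.1⟩, by simp, by omega,
          hlo, hhi, hp.2.2.2⟩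
    · rintro ⟨⟨hs | hs, hhead, hgood⟩, hafter, hsum, -, -, hstrip⟩
      · subst hs
        exact Or.inl ⟨rfl, hstrip.le_hi,
          (ih hstrip.lo_le hstrip.le_hi).2 ⟨hgood, by simp, by omega, hstrip⟩⟩
      · have hdown : afterDown = false := by
          cases afterDown
          · rfl
          · have := hafter rfl; omega
        exact Or.inr ⟨hs, hdown, hstrip.lo_le, (ih hstrip.lo_le hstrip.le_hi).2
          ⟨hgood, fun _ t ht => (hhead t ht).resolve_left (by omega), by omega, hstrip⟩⟩

noncomputable def stripWords (lo hi : ℤ) : ℕ → ℤ → Bool → Finset (List ℤ)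
  | 0, h, _ => if h = 0 then {[]} else ∅
  | n + 1, h, afterDown =>
      (if h + 1 ≤ hi then (stripWords lo hi n (h + 1) false).image (List.cons 1) else ∅) ∪
      (if afterDown then ∅ else
        (Finset.Icc (lo - h) (-1)).biUnion fun s =>
          (stripWords lo hi n (h + s) true).image (List.cons s))

lemma mem_stripWords {lo hi : ℤ} {n : ℕ} {h : ℤ} {afterDown : Bool} {p : List ℤ} :
    p ∈ stripWords lo hi n h afterDown ↔ StripAccepts lo hi h afterDown p ∧ p.length = n := by
  induction n generalizing h afterDown p with
  | zero => cases p <;> simp only [stripWords, StripAccepts] <;> split_ifs <;> simp_all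
  | succ n ih =>
    cases p with
    | nil => simp only [stripWords]; split_ifs <;> simp
    | cons s p =>
      simp only [stripWords, Finset.mem_union, StripAccepts, List.length_cons]
      split_ifs <;> simp [ih] <;> grind

lemma card_stripWords_succ (lo hi : ℤ) (n : ℕ) (h : ℤ) (afterDown : Bool) :
    (stripWords lo hi (n + 1) h afterDown).card =
      (if h + 1 ≤ hi then (stripWords lo hi n (h + 1) false).card else 0) +
      (if afterDown then 0 else
        ∑ s ∈ Finset.Icc (lo - h) (-1), (stripWords lo hi n (h + s) true).card) := by
  have hcons {s : ℤ} (A : Finset (List ℤ)) : (A.image (List.cons s)).card = A.card :=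
    Finset.card_image_of_injective A List.cons_injective
  rw [stripWords, Finset.card_union_of_disjoint]
  · congr 1
    · split_ifs <;> simp [hcons]
    · split_ifs
      · rfl
      · rw [Finset.card_biUnion]
        · simp only [hcons]
        · intro s _ t _ hst
          simp only [Function.onFun, Finset.disjoint_left, Finset.mem_image]
          rintro _ ⟨p, -, rfl⟩ ⟨q, -, hq⟩
          exact hst (List.cons.inj hq).1.symm
  · split_ifs <;> simp only [Finset.disjoint_left, Finset.mem_image, Finset.mem_biUnion,
      Finset.mem_Icc] <;> grind

noncomputable def unitStripCount (n : ℕ) (h : ℤ) (afterDown : Bool) : ℕ :=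
  (stripWords (-1) 1 n h afterDown).card

@[simp]
lemma unitStripCount_zero (h : ℤ) (afterDown : Bool) :
    unitStripCount 0 h afterDown = if h = 0 then 1 else 0 := by
  rw [unitStripCount, stripWords]
  split_ifs <;> rfl

@[simp]
lemma unitStripCount_succ_zero_false (n : ℕ) :
    unitStripCount (n + 1) 0 false = unitStripCount n 1 false + unitStripCount n (-1) true := by
  simp [unitStripCount, card_stripWords_succ]

@[simp]
lemma unitStripCount_succ_one_false (n : ℕ) :
    unitStripCount (n + 1) 1 false = unitStripCount n (-1) true + unitStripCount n 0 true := by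
  have : Finset.Icc (-2 : ℤ) (-1) = {-2, -1} := by decide
  simp [unitStripCount, card_stripWords_succ, this]

@[simp]
lemma unitStripCount_succ_negOne_true (n : ℕ) :
    unitStripCount (n + 1) (-1) true = unitStripCount n 0 false := by
  simp [unitStripCount, card_stripWords_succ]

@[simp]
lemma unitStripCount_succ_zero_true (n : ℕ) :
    unitStripCount (n + 1) 0 true = unitStripCount n 1 false := by
  simp [unitStripCount, card_stripWords_succ]

lemma g11Count_eq_unitStripCount (n : ℕ) : g11Count n = unitStripCount n 0 false := by
  rw [g11Count, unitStripCount, ← Nat.card_eq_finsetCard]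
  refine Nat.card_congr (Equiv.subtypeEquivRight fun p => ?_)
  rw [mem_stripWords, stripAccepts_iff (by norm_num) (by norm_num), IsGDAP,
    bounded11_iff_inStrip]
  simp [and_assoc]

lemma g11Count_add_four (n : ℕ) :
    g11Count (n + 4) + g11Count n = 2 * g11Count (n + 2) + g11Count (n + 1) := by
  simp only [g11Count_eq_unitStripCount, unitStripCount_succ_zero_false,
    unitStripCount_succ_one_false, unitStripCount_succ_negOne_true, unitStripCount_succ_zero_true]
  omega

lemma mk_mul_quartic_eq_one {R : Type*} [CommRing R] {a : ℕ → R} (h0 : a 0 = 1) (h1 : a 1 = 0)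
    (h2 : a 2 = 2) (h3 : a 3 = 1) (hrec : ∀ n, a (n + 4) + a n = 2 * a (n + 2) + a (n + 1)) :
    mk a * (X ^ 4 - X ^ 3 - 2 * X ^ 2 + 1) = 1 := by
  ext n
  rcases n with _ | _ | _ | _ | n <;>
    simp [two_mul, mul_add, mul_sub, coeff_mul_X_pow', coeff_one, h0, h1, h2, h3]
  · norm_num
  · linear_combination hrec n

/-- the o.g.f. of GDAP bounded by `y = -1` and `y = 1` is
`1/(x⁴-x³-2x²+1)`, with series beginning
`1 + 2x² + x³ + 3x⁴ + 4x⁵ + 5x⁶ + 10x⁷ + 11x⁸ + 21x⁹ + 27x¹⁰ + ⋯`. -/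
theorem stmt15 :
    G11 * (X ^ 4 - X ^ 3 - 2 * X ^ 2 + 1) = 1 ∧
    g11Count 0 = 1 ∧ g11Count 1 = 0 ∧ g11Count 2 = 2 ∧ g11Count 3 = 1 ∧
    g11Count 4 = 3 ∧ g11Count 5 = 4 ∧ g11Count 6 = 5 ∧ g11Count 7 = 10 ∧
    g11Count 8 = 11 ∧ g11Count 9 = 21 ∧ g11Count 10 = 27 := by
  have hrec (n : ℕ) : (g11Count (n + 4) : ℚ) + g11Count n =
      2 * g11Count (n + 2) + g11Count (n + 1) := by
    exact_mod_cast g11Count_add_four n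
  refine ⟨mk_mul_quartic_eq_one ?_ ?_ ?_ ?_ hrec, ?_⟩ <;>
    simp [g11Count_eq_unitStripCount]
end
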